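/- arXiv:0711.3201 — 4 statements merged into one kernel-verified Lean document; each statement's English description precedes it below -/
import Mathlib

section
/- Let A ⊆ ℕ be a WM set and let p_1, p_2 ∈ ℤ[n] have positive leading coefficients with deg p_1 ≤ deg p_2 − 2 and with p_2(n) ≥ p_1(n) ≥ 1 for all n ∈ ℕ. Then A' = A \ ⋃_{n ∈ ℕ} {m ∈ ℕ : p_2(n) − p_1(n) ≤ m ≤ p_2(n)} is a WM set, and there is no quadruple (z, x, y_1, y_2) with x, y_1, y_2 ∈ A', x + y_1 = p_1(z) and x + y_2 = p_2(z). -/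
open MeasureTheory Filter Topology Polynomial

/-- The space `Ω = {0,1}^ℕ`. -/
abbrev Omega : Type := ℕ → Bool

/-- The shift map `(Tω)ₙ = ω_{n+1}`. -/
def shift : Omega → Omega := fun ω n => ω (n + 1)

open Classical in
/-- The indicator sequence `ξ = 1_S ∈ Ω` of a set `S ⊆ ℕ`. -/
noncomputable def indicatorSeq (S : Set ℕ) : Omega := fun n => decide (n ∈ S)

/-- The orbit closure `X_ξ` of a point `ξ ∈ Ω` under the shift. -/
def orbitClosure (ξ : Omega) : Set Omega := closure {ω | ∃ n : ℕ, shift^[n] ξ = ω}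

open Classical in
/-- The number of elements of `S` in the interval `[a, b]`. -/
noncomputable def countIn (S : Set ℕ) (a b : ℕ) : ℕ :=
  ((Finset.Icc a b).filter (fun n => n ∈ S)).card

/-- `S ⊆ ℕ` has density `δ`: `(1/N)|S ∩ [1,N]| → δ`. -/
def HasDensity (S : Set ℕ) (δ : ℝ) : Prop :=
  Tendsto (fun N : ℕ => (countIn S 1 N : ℝ) / N) atTop (𝓝 δ)

/-- The upper density of `S ⊆ ℕ`: `limsup (1/N)|S ∩ [1,N]|`. -/
noncomputable def upperDensity (S : Set ℕ) : ℝ :=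
  limsup (fun N : ℕ => (countIn S 1 N : ℝ) / N) atTop

/-- `ξ` is a generic point for the measure `μ`: Birkhoff averages of every continuous
function converge to the integral. -/
def IsGeneric (ξ : Omega) (μ : Measure Omega) : Prop :=
  ∀ f : C(Omega, ℝ),
    Tendsto (fun N : ℕ => (∑ n ∈ Finset.range N, f (shift^[n] ξ)) / N) atTop
      (𝓝 (∫ x, f x ∂μ))

/-- `A ⊆ ℕ` is a WM set: it has positive density and `1_A` is generic for a shift-invariant
Borel probability measure `μ` supported on the orbit closure `X_{1_A}` such that the
product system `(X × X, μ × μ, T × T)` is ergodic (weak mixing). -/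
def IsWMSet (A : Set ℕ) : Prop :=
  (∃ δ : ℝ, 0 < δ ∧ HasDensity A δ) ∧
  ∃ (μ : Measure Omega) (_ : IsProbabilityMeasure μ),
    μ (orbitClosure (indicatorSeq A)) = 1 ∧
    IsGeneric (indicatorSeq A) μ ∧
    Ergodic (fun x : Omega × Omega => (shift x.1, shift x.2)) (μ.prod μ)

/-!
The removed set `B = ⋃ₙ [p₂(n) - p₁(n), p₂(n)]` has density zero: the intervals meeting `[1, N]`
have index `n ≲ N ^ (1 / deg p₂)` and length `O(n ^ deg p₁)`, so their total length is
`O(N ^ ((deg p₁ + 1) / deg p₂)) = o(N)` because `deg p₁ + 1 < deg p₂`.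

Changing `1_A` on a set of density zero changes, for each fixed `L`, only a density-zero set of
windows `[n, n + L)`; since a continuous function on `{0,1}^ℕ` depends up to `ε` on finitely many
coordinates, the Birkhoff averages do not change. Hence `1_{A \ B}` is generic for the same weakly
mixing measure, which is then carried by its orbit closure, and `A \ B` has the density of `A`.

A solution would give `0 ≤ x ≤ p₁(z)`, hence `y₂ = p₂(z) - x ∈ [p₂(z) - p₁(z), p₂(z)]`.
-/

open Finset Polynomial Asymptotics

lemma countIn_mono {S T : Set ℕ} (h : S ⊆ T) (a b : ℕ) : countIn S a b ≤ countIn T a b := by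
  classical
  exact card_le_card (monotone_filter_right _ fun _ _ hm => h hm)

lemma countIn_union_le (S T : Set ℕ) (a b : ℕ) :
    countIn (S ∪ T) a b ≤ countIn S a b + countIn T a b := by
  classical
  unfold countIn
  simpa only [Set.mem_union, filter_or] using card_union_le _ _

open Classical in
lemma card_filter_range_le_countIn (S : Set ℕ) (N : ℕ) :
    #{n ∈ range N | n ∈ S} ≤ countIn S 1 N + 1 := by
  calc #{n ∈ range N | n ∈ S} ≤ #(insert 0 {n ∈ Icc 1 N | n ∈ S}) := by
        refine card_le_card fun n hn => ?_
        simp only [mem_filter, mem_range, mem_insert, mem_Icc] at hn ⊢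
        rcases Nat.eq_zero_or_pos n with rfl | hpos
        · exact Or.inl rfl
        · exact Or.inr ⟨⟨hpos, hn.1.le⟩, hn.2⟩
    _ ≤ countIn S 1 N + 1 := by unfold countIn; convert card_insert_le _ _

lemma HasDensity.zero_mono {S T : Set ℕ} (hT : HasDensity T 0) (h : S ⊆ T) : HasDensity S 0 :=
  squeeze_zero (fun _ => by positivity)
    (fun N => div_le_div_of_nonneg_right (by exact_mod_cast countIn_mono h 1 N) N.cast_nonneg) hT

lemma HasDensity.diff {A B : Set ℕ} {δ : ℝ} (hA : HasDensity A δ) (hB : HasDensity B 0) :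
    HasDensity (A \ B) δ := by
  have hlow (N : ℕ) : (countIn A 1 N : ℝ) / N - countIn B 1 N / N ≤ countIn (A \ B) 1 N / N := by
    rw [← sub_div]
    gcongr
    rw [sub_le_iff_le_add]
    exact_mod_cast (countIn_mono (by simp : A ⊆ (A \ B) ∪ B) 1 N).trans (countIn_union_le _ _ 1 N)
  have hup (N : ℕ) : (countIn (A \ B) 1 N : ℝ) / N ≤ countIn A 1 N / N := by
    gcongr
    exact_mod_cast countIn_mono Set.sdiff_subset 1 N
  exact tendsto_of_tendsto_of_tendsto_of_le_of_le (by simpa using hA.sub hB) hA hlow hup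

lemma countIn_setOf_exists_lt_add_mem_le (D : Set ℕ) (L N : ℕ) :
    countIn {n | ∃ k < L, n + k ∈ D} 1 N ≤ L * countIn D 1 (N + L) := by
  classical
  unfold countIn
  calc _ ≤ #((range L).biUnion fun k => {m ∈ Icc 1 (N + L) | m ∈ D}.image (· - k)) := by
        refine card_le_card fun n hn => ?_
        simp only [mem_filter, mem_Icc, Set.mem_ofPred_eq] at hn
        obtain ⟨⟨h1, hN⟩, k, hk, hD⟩ := hn
        simp only [mem_biUnion, mem_range, mem_image, mem_filter, mem_Icc]
        exact ⟨k, hk, n + k, ⟨⟨by omega, by omega⟩, hD⟩, by omega⟩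
    _ ≤ ∑ k ∈ range L, #({m ∈ Icc 1 (N + L) | m ∈ D}.image (· - k)) := card_biUnion_le
    _ ≤ ∑ _k ∈ range L, #{m ∈ Icc 1 (N + L) | m ∈ D} := sum_le_sum fun _ _ => card_image_le
    _ = _ := by simp

lemma HasDensity.setOf_exists_lt_add_mem {D : Set ℕ} (hD : HasDensity D 0) (L : ℕ) :
    HasDensity {n | ∃ k < L, n + k ∈ D} 0 := by
  have hD' := (hD.comp (tendsto_add_atTop_nat L)).const_mul (2 * L : ℝ)
  rw [mul_zero] at hD'
  refine squeeze_zero' (Eventually.of_forall fun _ => by positivity) ?_ hD'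
  filter_upwards [eventually_ge_atTop (max L 1)] with N hN
  have hN1 : (1 : ℝ) ≤ N := by exact_mod_cast le_of_max_le_right hN
  have hLN : (L : ℝ) ≤ N := by exact_mod_cast le_of_max_le_left hN
  simp only [Function.comp_apply, Nat.cast_add]
  calc (countIn {n | ∃ k < L, n + k ∈ D} 1 N : ℝ) / N ≤ L * countIn D 1 (N + L) / N := by
        gcongr
        exact_mod_cast countIn_setOf_exists_lt_add_mem_le D L N
    _ ≤ 2 * L * (countIn D 1 (N + L) / (N + L)) := by
        rw [mul_div_assoc', div_le_div_iff₀ (by positivity) (by positivity)]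
        have : (0 : ℝ) ≤ L * countIn D 1 (N + L) := by positivity
        nlinarith

open Classical in
lemma tendsto_sum_range_div_zero_of_hasDensity {g : ℕ → ℝ} {M : ℝ} (hM : ∀ n, |g n| ≤ M)
    (hg : ∀ ε > 0, HasDensity {n | ε < |g n|} 0) :
    Tendsto (fun N : ℕ => (∑ n ∈ range N, g n) / N) atTop (𝓝 0) := by
  have hM0 : 0 ≤ M := (abs_nonneg _).trans (hM 0)
  refine Metric.tendsto_nhds.2 fun ε hε => ?_
  set S := {n | ε / 2 < |g n|}
  have hsmall := ((hg _ (half_pos hε)).add tendsto_one_div_atTop_nhds_zero_nat).const_mul M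
  rw [add_zero, mul_zero] at hsmall
  filter_upwards [hsmall.eventually (gt_mem_nhds (half_pos hε)), eventually_gt_atTop 0]
    with N hN hN0
  have hterm (n : ℕ) : |g n| ≤ ε / 2 + if n ∈ S then M else 0 := by
    split_ifs with hn
    · linarith [hM n]
    · simpa [S] using hn
  have hsum : |∑ n ∈ range N, g n| ≤ N * (ε / 2) + M * (countIn S 1 N + 1) :=
    calc |∑ n ∈ range N, g n| ≤ ∑ n ∈ range N, (ε / 2 + if n ∈ S then M else 0) :=
          (abs_sum_le_sum_abs _ _).trans (sum_le_sum fun n _ => hterm n)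
      _ = N * (ε / 2) + M * #{n ∈ range N | n ∈ S} := by
          rw [sum_add_distrib, ← sum_filter]; simp [mul_comm]
      _ ≤ N * (ε / 2) + M * (countIn S 1 N + 1) := by
          gcongr; exact_mod_cast card_filter_range_le_countIn S N
  have hN' : (0 : ℝ) < N := by exact_mod_cast hN0
  rw [Real.dist_eq, sub_zero, abs_div, Nat.abs_cast, div_lt_iff₀ hN']
  rw [← add_div, mul_div_assoc', div_lt_iff₀ hN'] at hN
  linarith

lemma shift_iterate_apply (ω : Omega) (n k : ℕ) : shift^[n] ω k = ω (k + n) := by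
  induction n generalizing k with
  | zero => rfl
  | succ n ih => rw [Function.iterate_succ_apply', shift, ih, add_right_comm, add_assoc]

lemma ContinuousMap.exists_cylinder_dist_lt {E : ℕ → Type*} [∀ n, TopologicalSpace (E n)]
    [∀ n, DiscreteTopology (E n)] [CompactSpace (∀ n, E n)] {α : Type*} [PseudoMetricSpace α]
    (f : C(∀ n, E n, α)) {ε : ℝ} (hε : 0 < ε) :
    ∃ L, ∀ x y, y ∈ PiNat.cylinder x L → dist (f x) (f y) < ε := by
  let _ := PiNat.metricSpace (E := E)
  obtain ⟨δ, hδ, hf⟩ := Metric.uniformContinuous_iff.1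
    (CompactSpace.uniformContinuous_of_continuous f.continuous) ε hε
  obtain ⟨L, hL⟩ := exists_pow_lt_of_lt_one hδ (one_half_lt_one (α := ℝ))
  refine ⟨L, fun x y hy => hf ?_⟩
  rw [dist_comm]
  exact (PiNat.mem_cylinder_iff_dist_le.1 hy).trans_lt (by simpa using hL)

lemma IsGeneric.of_hasDensity_setOf_ne {ξ ξ' : Omega} {μ : Measure Omega} (hξ : IsGeneric ξ μ)
    (h : HasDensity {m | ξ m ≠ ξ' m} 0) : IsGeneric ξ' μ := by
  intro f
  have hdiff : Tendsto (fun N : ℕ => (∑ n ∈ range N, (f (shift^[n] ξ') - f (shift^[n] ξ))) / N)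
      atTop (𝓝 0) := by
    refine tendsto_sum_range_div_zero_of_hasDensity (M := ‖f‖ + ‖f‖) (fun n => ?_)
      fun ε hε => ?_
    · exact (abs_sub _ _).trans (add_le_add (f.norm_coe_le_norm _) (f.norm_coe_le_norm _))
    · obtain ⟨L, hL⟩ := f.exists_cylinder_dist_lt hε
      refine (h.setOf_exists_lt_add_mem L).zero_mono fun n hn => ?_
      by_contra hbad
      simp only [Set.mem_ofPred_eq, not_exists, not_and, not_not] at hbad
      refine (hL (shift^[n] ξ') (shift^[n] ξ) fun k hk => ?_).not_ge hn.le
      simpa [shift_iterate_apply, add_comm] using hbad k hk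
  simpa [sum_sub_distrib, sub_div] using hdiff.add (hξ f)

lemma measure_eq_one_of_forall_integral_eq_zero {X : Type*} [TopologicalSpace X]
    [TopologicalSpace.PseudoMetrizableSpace X] [CompactSpace X] [MeasurableSpace X]
    [OpensMeasurableSpace X] {μ : Measure X} [IsProbabilityMeasure μ] {F : Set X}
    (hF : IsClosed F) (hne : F.Nonempty)
    (h : ∀ f : C(X, ℝ), (∀ x ∈ F, f x = 0) → ∫ x, f x ∂μ = 0) : μ F = 1 := by
  let _ := TopologicalSpace.pseudoMetrizableSpacePseudoMetric X
  let g : C(X, ℝ) := ⟨fun x => Metric.infDist x F, Metric.continuous_infDist_pt F⟩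
  have hg : g =ᵐ[μ] 0 := (integral_eq_zero_iff_of_nonneg (fun x => Metric.infDist_nonneg)
    (g.continuous.integrable_of_hasCompactSupport (.of_compactSpace _))).1
    (h g fun x hx => Metric.infDist_zero_of_mem hx)
  rw [← prob_compl_eq_zero_iff hF.measurableSet]
  exact measure_mono_null (fun x hx => ((hF.notMem_iff_infDist_pos hne).1 hx).ne') (ae_iff.1 hg)

lemma IsGeneric.measure_orbitClosure {ξ : Omega} {μ : Measure Omega} [IsProbabilityMeasure μ]
    (hξ : IsGeneric ξ μ) : μ (orbitClosure ξ) = 1 := by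
  refine measure_eq_one_of_forall_integral_eq_zero isClosed_closure
    ⟨ξ, subset_closure ⟨0, rfl⟩⟩ fun f hf => tendsto_nhds_unique (hξ f) ?_
  simp [hf _ (subset_closure ⟨_, rfl⟩)]

lemma IsWMSet.diff {A B : Set ℕ} (hA : IsWMSet A) (hB : HasDensity B 0) : IsWMSet (A \ B) := by
  obtain ⟨⟨δ, hδ, hAδ⟩, μ, hμ, -, hgen, herg⟩ := hA
  have hgen' : IsGeneric (indicatorSeq (A \ B)) μ :=
    hgen.of_hasDensity_setOf_ne <| hB.zero_mono fun m hm => by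
      by_contra hmB
      simp [indicatorSeq, hmB] at hm
  exact ⟨⟨δ, hδ, hAδ.diff hB⟩, μ, hμ, hgen'.measure_orbitClosure, hgen', herg⟩

lemma countIn_iUnion_le_sum {a b : ℕ → ℤ} (hab : ∀ j, a j ≤ b j) {N k : ℕ}
    (hk : ∀ j, a j ≤ N → j ≤ k) :
    (countIn (⋃ j, {m : ℕ | a j ≤ m ∧ (m : ℤ) ≤ b j}) 1 N : ℤ) ≤
      ∑ i ∈ range (k + 1), (b i - a i + 1) := by
  classical
  calc (countIn (⋃ j, {m : ℕ | a j ≤ m ∧ (m : ℤ) ≤ b j}) 1 N : ℤ)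
      ≤ #((range (k + 1)).biUnion fun i => Icc (a i) (b i)) := by
        refine Nat.cast_le.2 (card_le_card_of_injOn (fun m : ℕ => (m : ℤ)) (fun m hm => ?_)
          Nat.cast_injective.injOn)
        simp only [coe_filter, mem_Icc, Set.mem_iUnion, Set.mem_ofPred_eq] at hm
        obtain ⟨⟨-, hmN⟩, j, hj, hjb⟩ := hm
        simp only [coe_biUnion, coe_range, Set.mem_Iio, coe_Icc, Set.mem_iUnion, Set.mem_Icc]
        exact ⟨j, Nat.lt_succ_of_le (hk j (hj.trans (by exact_mod_cast hmN))), hj, hjb⟩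
    _ ≤ ∑ i ∈ range (k + 1), (#(Icc (a i) (b i)) : ℤ) := by exact_mod_cast card_biUnion_le
    _ = ∑ i ∈ range (k + 1), (b i - a i + 1) := sum_congr rfl fun i _ => by
        rw [Int.card_Icc, Int.toNat_of_nonneg (by linarith [hab i])]
        ring

lemma countIn_iUnion_le_of_sum_le {a b : ℕ → ℤ} (hab : ∀ j, a j ≤ b j) {ε : ℝ} (hε : 0 ≤ ε)
    (hε1 : ε ≤ 1) {J : ℕ}
    (hJ : ∀ j ≥ J, ((∑ i ∈ range (j + 1), (b i - a i + 1) : ℤ) : ℝ) ≤ ε * a j) (N : ℕ) :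
    (countIn (⋃ j, {m : ℕ | a j ≤ m ∧ (m : ℤ) ≤ b j}) 1 N : ℝ) ≤
      ((∑ i ∈ range (J + 1), (b i - a i + 1) : ℤ) : ℝ) + ε * N := by
  classical
  have hS_ge (j : ℕ) : (j : ℝ) + 1 ≤ ((∑ i ∈ range (j + 1), (b i - a i + 1) : ℤ) : ℝ) := by
    have := card_nsmul_le_sum (range (j + 1)) (fun i => b i - a i + 1) 1
      fun i _ => by linarith [hab i]
    simp only [card_range, nsmul_eq_mul, mul_one] at this
    exact_mod_cast this
  have hεN : (0 : ℝ) ≤ ε * N := by positivity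
  by_cases hT : ∃ j, J ≤ j ∧ a j ≤ N
  · -- `k` is the last index `≥ J` whose interval starts below `N`; it exists because
    -- `j + 1 ≤ ε * a j ≤ N` bounds every such index.
    have hbound : ∀ j, J ≤ j → a j ≤ N → j ≤ N := fun j hJj hjN => by
      have h1 : (j : ℝ) + 1 ≤ ε * a j := (hS_ge j).trans (hJ j hJj)
      have h2 : (0 : ℝ) ≤ a j := by
        by_contra! h
        nlinarith
      have h3 : (a j : ℝ) ≤ N := by exact_mod_cast hjN
      exact_mod_cast (by nlinarith : (j : ℝ) ≤ N)
    obtain ⟨j, hJj, hj⟩ := hT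
    set k := Nat.findGreatest (fun j => J ≤ j ∧ a j ≤ N) N
    have hk : J ≤ k ∧ a k ≤ N :=
      Nat.findGreatest_spec (P := fun j => J ≤ j ∧ a j ≤ N) (hbound j hJj hj) ⟨hJj, hj⟩
    have hcount := countIn_iUnion_le_sum hab (N := N) (k := k) fun i hi => by
      rcases le_total J i with hJi | hiJ
      · exact Nat.le_findGreatest (P := fun j => J ≤ j ∧ a j ≤ N) (hbound i hJi hi) ⟨hJi, hi⟩
      · exact hiJ.trans hk.1
    calc (countIn (⋃ j, {m : ℕ | a j ≤ m ∧ (m : ℤ) ≤ b j}) 1 N : ℝ)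
        ≤ ((∑ i ∈ range (k + 1), (b i - a i + 1) : ℤ) : ℝ) := by exact_mod_cast hcount
      _ ≤ ε * a k := hJ k hk.1
      _ ≤ ε * N := by gcongr; exact_mod_cast hk.2
      _ ≤ _ := by linarith [hS_ge J, (J.cast_nonneg : (0 : ℝ) ≤ J)]
  · push Not at hT
    have hcount := countIn_iUnion_le_sum hab (N := N) (k := J) fun i hi =>
      le_of_not_gt fun hJi => (hT i hJi.le).not_ge hi
    calc (countIn (⋃ j, {m : ℕ | a j ≤ m ∧ (m : ℤ) ≤ b j}) 1 N : ℝ)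
        ≤ ((∑ i ∈ range (J + 1), (b i - a i + 1) : ℤ) : ℝ) := by exact_mod_cast hcount
      _ ≤ _ := le_add_of_nonneg_right hεN

lemma hasDensity_iUnion_zero {a b : ℕ → ℤ} (ha : ∀ j, 0 ≤ a j) (hab : ∀ j, a j ≤ b j)
    (hsum : (fun j => ((∑ i ∈ range (j + 1), (b i - a i + 1) : ℤ) : ℝ)) =o[atTop]
      fun j => (a j : ℝ)) :
    HasDensity (⋃ j, {m : ℕ | a j ≤ m ∧ (m : ℤ) ≤ b j}) 0 := by
  refine tendsto_order.2 ⟨fun δ hδ => Eventually.of_forall fun N => hδ.trans_le (by positivity),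
    fun δ hδ => ?_⟩
  set ε := min (δ / 2) 1
  have hε : 0 < ε := by positivity
  obtain ⟨J, hJ⟩ := eventually_atTop.1 (hsum.bound hε)
  have hJ' : ∀ j ≥ J, ((∑ i ∈ range (j + 1), (b i - a i + 1) : ℤ) : ℝ) ≤ ε * a j := fun j hj => by
    have hS : (0 : ℤ) ≤ ∑ i ∈ range (j + 1), (b i - a i + 1) :=
      sum_nonneg fun i _ => by linarith [hab i]
    have := hJ j hj
    rwa [Real.norm_of_nonneg (by exact_mod_cast hS), Real.norm_of_nonneg (by exact_mod_cast ha j)]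
      at this
  filter_upwards [(tendsto_const_div_atTop_nhds_zero_nat
      ((∑ i ∈ range (J + 1), (b i - a i + 1) : ℤ) : ℝ)).eventually (gt_mem_nhds (half_pos hδ)),
    eventually_gt_atTop 0] with N hN hN0
  have hN' : (0 : ℝ) < N := by exact_mod_cast hN0
  calc _ ≤ (((∑ i ∈ range (J + 1), (b i - a i + 1) : ℤ) : ℝ) + ε * N) / N := by
        gcongr
        exact countIn_iUnion_le_of_sum_le hab hε.le (min_le_right _ _) hJ' N
    _ = ((∑ i ∈ range (J + 1), (b i - a i + 1) : ℤ) : ℝ) / N + ε := by field_simp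
    _ < δ / 2 + δ / 2 := add_lt_add_of_lt_of_le hN (min_le_left _ _)
    _ = δ := add_halves δ

lemma Polynomial.abs_eval_le (P : ℝ[X]) {x : ℝ} (hx : 0 ≤ x) :
    |P.eval x| ≤ (∑ i ∈ range (P.natDegree + 1), |P.coeff i|) * (x + 1) ^ P.natDegree := by
  rw [eval_eq_sum_range, sum_mul]
  refine (abs_sum_le_sum_abs _ _).trans (sum_le_sum fun i hi => ?_)
  rw [abs_mul, abs_pow, abs_of_nonneg hx]
  gcongr
  calc x ^ i ≤ (x + 1) ^ i := by gcongr; linarith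
    _ ≤ (x + 1) ^ P.natDegree :=
      pow_le_pow_right₀ (by linarith) (Nat.lt_succ_iff.1 (mem_range.1 hi))

lemma Polynomial.isLittleO_sum_range_succ_eval {P Q : ℝ[X]} (h : P.natDegree + 2 ≤ Q.natDegree) :
    (fun j : ℕ => ∑ i ∈ range (j + 1), P.eval (i : ℝ)) =o[atTop] fun j : ℕ => Q.eval (j : ℝ) := by
  set d := P.natDegree
  have hbound : (fun j : ℕ => ∑ i ∈ range (j + 1), P.eval (i : ℝ)) =O[atTop]
      fun j : ℕ => ((X + 1) ^ (d + 1) : ℝ[X]).eval (j : ℝ) := by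
    refine IsBigO.of_bound (∑ i ∈ range (d + 1), |P.coeff i|) (Eventually.of_forall fun j => ?_)
    simp only [eval_pow, eval_add, eval_X, eval_one, Real.norm_eq_abs]
    rw [abs_of_nonneg (by positivity : (0 : ℝ) ≤ ((j : ℝ) + 1) ^ (d + 1))]
    calc |∑ i ∈ range (j + 1), P.eval (i : ℝ)|
        ≤ ∑ _i ∈ range (j + 1), (∑ i ∈ range (d + 1), |P.coeff i|) * ((j : ℝ) + 1) ^ d := by
          refine (abs_sum_le_sum_abs _ _).trans (sum_le_sum fun i hi => ?_)
          refine (P.abs_eval_le i.cast_nonneg).trans ?_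
          gcongr
          exact_mod_cast Nat.lt_succ_iff.1 (mem_range.1 hi)
      _ = (∑ i ∈ range (d + 1), |P.coeff i|) * ((j : ℝ) + 1) ^ (d + 1) := by
          simp only [sum_const, card_range, nsmul_eq_mul]; push_cast; ring
  have hQ : Q ≠ 0 := by rintro rfl; simp at h
  have hlt : ((X + 1) ^ (d + 1) : ℝ[X]).degree < Q.degree := by
    rw [degree_eq_natDegree hQ, ← C_1, degree_pow, degree_X_add_C, nsmul_one]
    exact_mod_cast (by omega : d + 1 < Q.natDegree)
  exact hbound.trans_isLittleO
    ((isLittleO_atTop_of_degree_lt _ _ hlt).comp_tendsto tendsto_natCast_atTop_atTop)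

lemma hasDensity_iUnion_Icc_eval_zero {p₁ p₂ : ℤ[X]} (hdeg : p₁.natDegree + 2 ≤ p₂.natDegree)
    (hpos : ∀ n : ℕ, 1 ≤ p₁.eval (n : ℤ) ∧ p₁.eval (n : ℤ) ≤ p₂.eval (n : ℤ)) :
    HasDensity (⋃ n : ℕ, {m : ℕ |
        p₂.eval (n : ℤ) - p₁.eval (n : ℤ) ≤ (m : ℤ) ∧ (m : ℤ) ≤ p₂.eval (n : ℤ)}) 0 := by
  refine hasDensity_iUnion_zero (fun n => sub_nonneg.2 (hpos n).2)
    (fun n => sub_le_self _ (by linarith [(hpos n).1])) ?_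
  have hinj := RingHom.injective_int (Int.castRingHom ℝ)
  have hdeg' : ((p₁ + 1).map (Int.castRingHom ℝ)).natDegree + 2 ≤
      ((p₂ - p₁).map (Int.castRingHom ℝ)).natDegree := by
    rw [natDegree_map_eq_of_injective hinj, natDegree_map_eq_of_injective hinj,
      natDegree_sub_eq_left_of_natDegree_lt (by omega)]
    have : (p₁ + 1).natDegree ≤ p₁.natDegree := by simpa using natDegree_add_le p₁ 1
    omega
  refine (isLittleO_sum_range_succ_eval hdeg').congr (fun j => ?_) (fun j => ?_) <;>
    simp [eval_natCast_map]

theorem WM_remove_progressions_kills_system_general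
    (A : Set ℕ) (hA : IsWMSet A) (p₁ p₂ : Polynomial ℤ)
    (hdeg : p₁.natDegree + 2 ≤ p₂.natDegree)
    (hpos : ∀ n : ℕ, 1 ≤ p₁.eval (n : ℤ) ∧ p₁.eval (n : ℤ) ≤ p₂.eval (n : ℤ)) :
    IsWMSet (A \ ⋃ n : ℕ, {m : ℕ |
        p₂.eval (n : ℤ) - p₁.eval (n : ℤ) ≤ (m : ℤ) ∧ (m : ℤ) ≤ p₂.eval (n : ℤ)}) ∧
    ¬ ∃ (z x y₁ y₂ : ℕ),
        x ∈ (A \ ⋃ n : ℕ, {m : ℕ |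
          p₂.eval (n : ℤ) - p₁.eval (n : ℤ) ≤ (m : ℤ) ∧ (m : ℤ) ≤ p₂.eval (n : ℤ)}) ∧
        y₁ ∈ (A \ ⋃ n : ℕ, {m : ℕ |
          p₂.eval (n : ℤ) - p₁.eval (n : ℤ) ≤ (m : ℤ) ∧ (m : ℤ) ≤ p₂.eval (n : ℤ)}) ∧
        y₂ ∈ (A \ ⋃ n : ℕ, {m : ℕ |
          p₂.eval (n : ℤ) - p₁.eval (n : ℤ) ≤ (m : ℤ) ∧ (m : ℤ) ≤ p₂.eval (n : ℤ)}) ∧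
        (x : ℤ) + (y₁ : ℤ) = p₁.eval (z : ℤ) ∧
        (x : ℤ) + (y₂ : ℤ) = p₂.eval (z : ℤ) := by
  refine ⟨hA.diff (hasDensity_iUnion_Icc_eval_zero hdeg hpos), ?_⟩
  rintro ⟨z, x, y₁, y₂, -, -, hy₂, h₁, h₂⟩
  exact hy₂.2 (Set.mem_iUnion.2 ⟨z, by omega, by omega⟩)

/-- **Remark (necessity of degree restrictions).** If `A` is a WM set and `p_1, p_2 ∈ ℤ[n]`
have positive leading coefficients with `deg p_1 ≤ deg p_2 − 2` and `p_2(n) ≥ p_1(n) ≥ 1`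
for all `n`, then `A' = A \ ⋃_n [p_2(n) − p_1(n), p_2(n)]` is a WM set within which the
system `x + y_1 = p_1(z)`, `x + y_2 = p_2(z)` has no solution. -/
theorem WM_remove_progressions_kills_system
    (A : Set ℕ) (hA : IsWMSet A) (p₁ p₂ : Polynomial ℤ)
    (hlead₁ : 0 < p₁.leadingCoeff) (hlead₂ : 0 < p₂.leadingCoeff)
    (hdeg : p₁.natDegree + 2 ≤ p₂.natDegree)
    (hpos : ∀ n : ℕ, 1 ≤ p₁.eval (n : ℤ) ∧ p₁.eval (n : ℤ) ≤ p₂.eval (n : ℤ)) :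
    IsWMSet (A \ ⋃ n : ℕ, {m : ℕ |
        p₂.eval (n : ℤ) - p₁.eval (n : ℤ) ≤ (m : ℤ) ∧ (m : ℤ) ≤ p₂.eval (n : ℤ)}) ∧
    ¬ ∃ (z x y₁ y₂ : ℕ),
        x ∈ (A \ ⋃ n : ℕ, {m : ℕ |
          p₂.eval (n : ℤ) - p₁.eval (n : ℤ) ≤ (m : ℤ) ∧ (m : ℤ) ≤ p₂.eval (n : ℤ)}) ∧
        y₁ ∈ (A \ ⋃ n : ℕ, {m : ℕ |
          p₂.eval (n : ℤ) - p₁.eval (n : ℤ) ≤ (m : ℤ) ∧ (m : ℤ) ≤ p₂.eval (n : ℤ)}) ∧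
        y₂ ∈ (A \ ⋃ n : ℕ, {m : ℕ |
          p₂.eval (n : ℤ) - p₁.eval (n : ℤ) ≤ (m : ℤ) ∧ (m : ℤ) ≤ p₂.eval (n : ℤ)}) ∧
        (x : ℤ) + (y₁ : ℤ) = p₁.eval (z : ℤ) ∧
        (x : ℤ) + (y₂ : ℤ) = p₂.eval (z : ℤ) :=
  WM_remove_progressions_kills_system_general A hA p₁ p₂ hdeg hpos
end

section
/- Let (X, 𝔅, μ, T) be a weakly mixing measure-preserving system (i.e., the product system (X × X, μ × μ, T × T) is ergodic) and let f ∈ L²(X, μ) with ∫_X f dμ = 0. Then for every ε > 0 there exists J₀ ∈ ℕ such that for every J ≥ J₀ and every sequence (b_j)_{j≥1} ∈ {0,1}^ℕ: ‖ (1/J) Σ_{j=1}^{J} b_j · (f ∘ T^j) ‖_{L²(X,μ)} < ε. -/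
/-!
Let `U` be the Koopman operator of `T` on `L²(μ)` and `c n = ∫ f ∘ Tⁿ · f dμ = ⟪Uⁿ f, f⟫`.
Since `U` is an isometry, `⟪Uʲ f, Uᵏ f⟫ = c |j - k|`, so expanding the square gives, uniformly in
the weights `b_j ∈ [-1, 1]`,
`‖J⁻¹ ∑_{j ≤ J} b_j Uʲ f‖² ≤ 2 J⁻¹ ∑_{n < J} |c n|`.
The autocorrelation of `f ⊗ f` under `T × T` is `c n ^ 2`; as `f ⊗ f` has mean zero and `T × T` is
ergodic, its projection onto the `T × T`-invariant functions vanishes, so von Neumann's mean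
ergodic theorem makes the Cesàro means of `c n ^ 2` tend to `0`. By Cauchy–Schwarz so do those
of `|c n|`.
-/

open MeasureTheory Filter Finset Function
open scoped Topology RealInnerProductSpace

lemma sum_comp_dist_le_two_mul_sum_range {g : ℕ → ℝ} (hg : ∀ n, 0 ≤ g n) {J j : ℕ}
    (hj : j ∈ Icc 1 J) :
    ∑ k ∈ Icc 1 J, g (Nat.dist j k) ≤ 2 * ∑ n ∈ range J, g n := by
  have hmaps : ∀ k ∈ Icc 1 J, Nat.dist j k ∈ range J := by
    intro k hk
    simp only [mem_Icc, mem_range] at hj hk ⊢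
    unfold Nat.dist
    omega
  have hfiber (n : ℕ) : #{k ∈ Icc 1 J | Nat.dist j k = n} ≤ 2 := by
    refine (card_le_card fun k hk => ?_).trans (card_le_two (a := j - n) (b := j + n))
    have : Nat.dist j k = n := (mem_filter.1 hk).2
    unfold Nat.dist at this
    simp only [mem_insert, mem_singleton]
    omega
  rw [← sum_fiberwise_of_maps_to' hmaps, mul_sum]
  refine sum_le_sum fun n _ => ?_
  rw [sum_const, nsmul_eq_mul]
  exact mul_le_mul_of_nonneg_right (by exact_mod_cast hfiber n) (hg n)

lemma norm_sq_average_Icc_smul_le {E : Type*} [NormedAddCommGroup E] [InnerProductSpace ℝ E]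
    {v : ℕ → E} {c : ℕ → ℝ} (hv : ∀ j k, ⟪v j, v k⟫ = c (Nat.dist j k))
    {b : ℕ → ℝ} (hb : ∀ j, |b j| ≤ 1) (J : ℕ) :
    ‖(1 / (J : ℝ)) • ∑ j ∈ Icc 1 J, b j • v j‖ ^ 2
      ≤ 2 * ((J : ℝ)⁻¹ * ∑ n ∈ range J, |c n|) := by
  have hterm (j k : ℕ) : b j * b k * c (Nat.dist j k) ≤ |c (Nat.dist j k)| := by
    refine (le_abs_self _).trans ?_
    rw [abs_mul, abs_mul]
    exact mul_le_of_le_one_left (abs_nonneg _) (mul_le_one₀ (hb j) (abs_nonneg _) (hb k))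
  have hexpand : ‖∑ j ∈ Icc 1 J, b j • v j‖ ^ 2
      = ∑ j ∈ Icc 1 J, ∑ k ∈ Icc 1 J, b j * b k * c (Nat.dist j k) := by
    rw [← real_inner_self_eq_norm_sq, sum_inner]
    refine sum_congr rfl fun j _ => ?_
    rw [real_inner_smul_left, inner_sum, mul_sum]
    refine sum_congr rfl fun k _ => ?_
    rw [real_inner_smul_right, hv, mul_assoc]
  calc ‖(1 / (J : ℝ)) • ∑ j ∈ Icc 1 J, b j • v j‖ ^ 2
      = (1 / (J : ℝ)) ^ 2 * ∑ j ∈ Icc 1 J, ∑ k ∈ Icc 1 J, b j * b k * c (Nat.dist j k) := by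
        rw [norm_smul, mul_pow, Real.norm_eq_abs, sq_abs, hexpand]
    _ ≤ (1 / (J : ℝ)) ^ 2 * ∑ j ∈ Icc 1 J, 2 * ∑ n ∈ range J, |c n| := by
        gcongr with j hj
        exact (sum_le_sum fun k _ => hterm j k).trans
          (sum_comp_dist_le_two_mul_sum_range (fun n => abs_nonneg _) hj)
    _ = 2 * ((J : ℝ)⁻¹ * ∑ n ∈ range J, |c n|) := by
        rw [sum_const, Nat.card_Icc, nsmul_eq_mul, Nat.add_sub_cancel]
        rcases J.eq_zero_or_pos with rfl | hJ
        · simp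
        · field_simp

lemma tendsto_cesaro_abs_of_tendsto_cesaro_sq {c : ℕ → ℝ}
    (h : Tendsto (fun N : ℕ => (N : ℝ)⁻¹ * ∑ n ∈ range N, c n ^ 2) atTop (𝓝 0)) :
    Tendsto (fun N : ℕ => (N : ℝ)⁻¹ * ∑ n ∈ range N, |c n|) atTop (𝓝 0) := by
  refine squeeze_zero (g := fun N : ℕ => √((N : ℝ)⁻¹ * ∑ n ∈ range N, c n ^ 2))
    (fun N => by positivity) (fun N => Real.le_sqrt_of_sq_le ?_) (by simpa using h.sqrt)
  calc ((N : ℝ)⁻¹ * ∑ n ∈ range N, |c n|) ^ 2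
      ≤ (N : ℝ)⁻¹ ^ 2 * (N * ∑ n ∈ range N, |c n| ^ 2) := by
        rw [mul_pow]
        gcongr
        simpa using sq_sum_le_card_mul_sum_sq (s := range N) (f := fun n => |c n|)
    _ = (N : ℝ)⁻¹ * ∑ n ∈ range N, c n ^ 2 := by
        rcases N.eq_zero_or_pos with rfl | hN
        · simp
        · simp only [sq_abs]
          field_simp

lemma ContinuousLinearMap.tendsto_birkhoffAverage_of_forall_fixed_inner_eq_zero {E : Type*}
    [NormedAddCommGroup E] [InnerProductSpace ℝ E] [CompleteSpace E] (U : E →L[ℝ] E)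
    (hU : ‖U‖ ≤ 1) {x : E} (hx : ∀ u, U u = u → ⟪u, x⟫ = 0) :
    Tendsto (birkhoffAverage ℝ U _root_.id · x) atTop (𝓝 0) := by
  convert U.tendsto_birkhoffAverage_orthogonalProjection hU x
  rw [eq_comm, Submodule.coe_eq_zero, Submodule.orthogonalProjectionOnto_eq_zero_iff]
  exact (Submodule.mem_orthogonal _ _).2 fun u hu => hx u (by simpa using hu)

lemma MeasureTheory.MemLp.mul_prod {α β : Type*} [MeasurableSpace α] [MeasurableSpace β]
    {μ : Measure α} {ν : Measure β} [SFinite ν] {f : α → ℝ} {g : β → ℝ}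
    (hf : MemLp f 2 μ) (hg : MemLp g 2 ν) :
    MemLp (fun p : α × β => f p.1 * g p.2) 2 (μ.prod ν) := by
  refine (memLp_two_iff_integrable_sq
    (hf.aestronglyMeasurable.comp_fst.mul hg.aestronglyMeasurable.comp_snd)).2 ?_
  simpa only [Pi.mul_apply, mul_pow] using hf.integrable_sq.mul_prod hg.integrable_sq

section Autocorrelation

variable {α : Type*} [MeasurableSpace α] {μ : Measure α} {T : α → α}

noncomputable def autocorrelation (μ : Measure α) (T : α → α) (f : α → ℝ) (n : ℕ) : ℝ :=
  ∫ x, f (T^[n] x) * f x ∂μ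

lemma autocorrelation_prodMap [SFinite μ] {β : Type*} [MeasurableSpace β] {ν : Measure β}
    [SFinite ν] (S : β → β) (f : α → ℝ) (g : β → ℝ) (n : ℕ) :
    autocorrelation (μ.prod ν) (Prod.map T S) (fun p => f p.1 * g p.2) n
      = autocorrelation μ T f n * autocorrelation ν S g n := by
  simp only [autocorrelation, Prod.map_iterate, Prod.map_fst, Prod.map_snd]
  rw [← integral_prod_mul]
  congr 1 with p
  ring

lemma MeasureTheory.Lp.inner_compMeasurePreserving_iterate_iterate
    (hT : MeasurePreserving T μ μ) {j k : ℕ} (hkj : k ≤ j) (u v : Lp ℝ 2 μ) :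
    ⟪(compMeasurePreserving T hT)^[j] u, (compMeasurePreserving T hT)^[k] v⟫
      = ⟪(compMeasurePreserving T hT)^[j - k] u, v⟫ := by
  obtain ⟨n, rfl⟩ := Nat.exists_eq_add_of_le hkj
  rw [Nat.add_sub_cancel_left, iterate_add_apply, compMeasurePreserving_iterate hT k]
  exact (compMeasurePreservingₗᵢ ℝ (E := ℝ) (p := 2) _ (hT.iterate k)).inner_map_map _ _

lemma MeasureTheory.Lp.coeFn_compMeasurePreserving_iterate_toLp
    (hT : MeasurePreserving T μ μ) {f : α → ℝ} (hf : MemLp f 2 μ) (n : ℕ) :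
    ⇑((compMeasurePreserving T hT)^[n] (hf.toLp f)) =ᵐ[μ] f ∘ T^[n] := by
  rw [compMeasurePreserving_iterate, toLp_compMeasurePreserving]
  exact (hf.comp_measurePreserving (hT.iterate n)).coeFn_toLp

lemma MeasureTheory.Lp.inner_compMeasurePreserving_iterate_toLp
    (hT : MeasurePreserving T μ μ) {f : α → ℝ} (hf : MemLp f 2 μ) (n : ℕ) :
    ⟪(compMeasurePreserving T hT)^[n] (hf.toLp f), hf.toLp f⟫ = autocorrelation μ T f n := by
  rw [L2.inner_def, autocorrelation]
  refine integral_congr_ae ?_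
  filter_upwards [coeFn_compMeasurePreserving_iterate_toLp hT hf n, hf.coeFn_toLp]
    with x h₁ h₂
  simp [h₁, h₂, mul_comm]

lemma MeasureTheory.Lp.inner_compMeasurePreserving_iterate_toLp_eq_autocorrelation_dist
    (hT : MeasurePreserving T μ μ) {f : α → ℝ} (hf : MemLp f 2 μ) (j k : ℕ) :
    ⟪(compMeasurePreserving T hT)^[j] (hf.toLp f), (compMeasurePreserving T hT)^[k] (hf.toLp f)⟫
      = autocorrelation μ T f (Nat.dist j k) := by
  rcases le_total k j with hkj | hjk
  · rw [inner_compMeasurePreserving_iterate_iterate hT hkj,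
      inner_compMeasurePreserving_iterate_toLp, Nat.dist_eq_sub_of_le_right hkj]
  · rw [real_inner_comm, inner_compMeasurePreserving_iterate_iterate hT hjk,
      inner_compMeasurePreserving_iterate_toLp, Nat.dist_eq_sub_of_le hjk]

lemma MeasureTheory.Lp.coeFn_sum_smul_compMeasurePreserving_iterate_toLp
    (hT : MeasurePreserving T μ μ) {f : α → ℝ} (hf : MemLp f 2 μ) (b : ℕ → ℝ) (s : Finset ℕ) :
    ⇑(∑ j ∈ s, b j • (compMeasurePreserving T hT)^[j] (hf.toLp f))
      =ᵐ[μ] fun x => ∑ j ∈ s, b j * f (T^[j] x) := by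
  induction s using Finset.induction_on with
  | empty =>
    simp only [sum_empty]
    exact coeFn_zero ℝ 2 μ
  | insert j s hj ih =>
    set v := (compMeasurePreserving T hT)^[j] (hf.toLp f)
    rw [sum_insert hj]
    filter_upwards [coeFn_add (b j • v) _, coeFn_smul (b j) v, ih,
      coeFn_compMeasurePreserving_iterate_toLp hT hf j] with x h₁ h₂ h₃ h₄
    rw [h₁, Pi.add_apply, h₂, Pi.smul_apply, h₃, h₄, sum_insert hj, smul_eq_mul, comp_apply]

lemma Ergodic.inner_eq_zero_of_compMeasurePreserving_eq (hT : Ergodic T μ) {u : Lp ℝ 2 μ}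
    (hu : Lp.compMeasurePreserving T hT.toMeasurePreserving u = u) {F : Lp ℝ 2 μ}
    (hF : ∫ x, F x ∂μ = 0) : ⟪u, F⟫ = 0 := by
  have hinv : u ∘ T =ᵐ[μ] u :=
    (Lp.coeFn_compMeasurePreserving u _).symm.trans (by rw [hu])
  obtain ⟨c, hc⟩ := hT.ae_eq_const_of_ae_eq_comp_ae (Lp.aestronglyMeasurable u) hinv
  have hprod : (fun x => ⟪u x, F x⟫) =ᵐ[μ] fun x => c * F x :=
    hc.mono fun x hx => by simp [hx, mul_comm]
  rw [L2.inner_def, integral_congr_ae hprod, integral_const_mul, hF, mul_zero]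

lemma Ergodic.tendsto_cesaro_autocorrelation (hT : Ergodic T μ) {f : α → ℝ} (hf : MemLp f 2 μ)
    (hint : ∫ x, f x ∂μ = 0) :
    Tendsto (fun N : ℕ => (N : ℝ)⁻¹ * ∑ n ∈ range N, autocorrelation μ T f n) atTop (𝓝 0) := by
  set U := (Lp.compMeasurePreservingₗᵢ ℝ (E := ℝ) (p := 2) T hT.toMeasurePreserving)
    |>.toContinuousLinearMap
  have hU : ⇑U = Lp.compMeasurePreserving T hT.toMeasurePreserving := rfl
  have hmean := U.tendsto_birkhoffAverage_of_forall_fixed_inner_eq_zero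
    (LinearIsometry.norm_toContinuousLinearMap_le _) fun u hu =>
      hT.inner_eq_zero_of_compMeasurePreserving_eq hu
        (by rwa [integral_congr_ae hf.coeFn_toLp])
  simpa [birkhoffAverage, birkhoffSum, sum_inner, real_inner_smul_left, hU,
    Lp.inner_compMeasurePreserving_iterate_toLp] using
    hmean.inner (𝕜 := ℝ) (tendsto_const_nhds (x := hf.toLp f))

lemma tendsto_cesaro_sq_autocorrelation_of_ergodic_prodMap [SFinite μ]
    (hT : Ergodic (Prod.map T T) (μ.prod μ)) {f : α → ℝ} (hf : MemLp f 2 μ)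
    (hint : ∫ x, f x ∂μ = 0) :
    Tendsto (fun N : ℕ => (N : ℝ)⁻¹ * ∑ n ∈ range N, autocorrelation μ T f n ^ 2)
      atTop (𝓝 0) := by
  have hprod : ∫ p, f p.1 * f p.2 ∂(μ.prod μ) = 0 := by
    rw [integral_prod_mul, hint, zero_mul]
  simpa only [autocorrelation_prodMap, sq] using
    hT.tendsto_cesaro_autocorrelation (hf.mul_prod hf) hprod

end Autocorrelation

/-- **Weighted mean ergodic theorem for weakly mixing systems.** If `(X, 𝔅, μ, T)` is a
weakly mixing measure-preserving system and `f ∈ L²(X, μ)` has `∫ f dμ = 0`, then for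
every `ε > 0` there exists `J₀` such that for every `J ≥ J₀` and every `{0,1}`-valued
sequence `(b_j)`, `‖(1/J) Σ_{j=1}^J b_j · (f ∘ T^j)‖_{L²(μ)} < ε`. -/
theorem weakly_mixing_weighted_average_L2_small
    (X : Type) [MeasurableSpace X] (μ : Measure X) [IsProbabilityMeasure μ]
    (T : X → X) (hT : MeasurePreserving T μ μ)
    (hwm : Ergodic (fun p : X × X => (T p.1, T p.2)) (μ.prod μ))
    (f : X → ℝ) (hf : MemLp f 2 μ) (hint : ∫ x, f x ∂μ = 0) :
    ∀ ε : ℝ, 0 < ε → ∃ J₀ : ℕ, ∀ J : ℕ, J₀ ≤ J →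
      ∀ b : ℕ → ℝ, (∀ j, b j = 0 ∨ b j = 1) →
        eLpNorm (fun x => (1 / (J : ℝ)) * ∑ j ∈ Finset.Icc 1 J, b j * f (T^[j] x)) 2 μ
          < ENNReal.ofReal ε := by
  intro ε hε
  have hdecay := tendsto_cesaro_abs_of_tendsto_cesaro_sq
    (tendsto_cesaro_sq_autocorrelation_of_ergodic_prodMap hwm hf hint)
  obtain ⟨J₀, hJ₀⟩ := eventually_atTop.1 (hdecay.eventually_lt_const (half_pos (pow_pos hε 2)))
  refine ⟨J₀, fun J hJ b hb => ?_⟩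
  set v : ℕ → Lp ℝ 2 μ := fun j => (Lp.compMeasurePreserving T hT)^[j] (hf.toLp f)
  set G : Lp ℝ 2 μ := (1 / (J : ℝ)) • ∑ j ∈ Icc 1 J, b j • v j
  have hG : ⇑G =ᵐ[μ] fun x => (1 / (J : ℝ)) * ∑ j ∈ Icc 1 J, b j * f (T^[j] x) := by
    filter_upwards [Lp.coeFn_smul (1 / (J : ℝ)) (∑ j ∈ Icc 1 J, b j • v j),
      Lp.coeFn_sum_smul_compMeasurePreserving_iterate_toLp hT hf b (Icc 1 J)] with x h₁ h₂
    rw [h₁, Pi.smul_apply, h₂, smul_eq_mul]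
  have hb_abs (j : ℕ) : |b j| ≤ 1 := by rcases hb j with h | h <;> simp [h]
  have hGsq : ‖G‖ ^ 2 < ε ^ 2 := calc
    ‖G‖ ^ 2 ≤ 2 * ((J : ℝ)⁻¹ * ∑ n ∈ range J, |autocorrelation μ T f n|) :=
      norm_sq_average_Icc_smul_le
        (Lp.inner_compMeasurePreserving_iterate_toLp_eq_autocorrelation_dist hT hf) hb_abs J
    _ < ε ^ 2 := by linarith [hJ₀ J hJ]
  rw [← eLpNorm_congr_ae hG, ← Lp.enorm_def, ← ofReal_norm]
  exact (ENNReal.ofReal_lt_ofReal_iff_of_nonneg (norm_nonneg _)).2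
    (lt_of_pow_lt_pow_left₀ 2 hε.le hGsq)
end

section
/- Let p ∈ ℤ[x] be a polynomial with deg p ≥ 2. Then there are infinitely many primes q such that the induced map ℤ/qℤ → ℤ/qℤ, sending the class of n to the class of p(n), is not surjective. -/
open Polynomial

lemma infinite_prime_dvd_eval (g : Polynomial ℤ) (hdeg : 0 < g.natDegree)
    (hN : g.eval 0 ≠ 0) :
    {q : ℕ | q.Prime ∧ ∃ a : ℤ, (q : ℤ) ∣ g.eval a}.Infinite := by
  by_contra hfin
  rw [Set.not_infinite] at hfin
  set N : ℤ := g.eval 0 with hNdef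
  set T : Finset ℕ := hfin.toFinset with hT
  set M : ℤ := ∏ q ∈ T, (q : ℤ) with hM
  have hM0 : M ≠ 0 := by
    rw [hM]
    refine Finset.prod_ne_zero_iff.2 ?_
    intro q hq
    have : q.Prime := (hfin.mem_toFinset.1 hq).1
    exact_mod_cast this.ne_zero
  -- bad set finite
  have hbad : {x : ℤ | |g.eval x| ≤ |N|}.Finite := by
    have : {x : ℤ | |g.eval x| ≤ |N|} ⊆
        ⋃ v ∈ (Finset.Icc (-|N|) (|N|) : Finset ℤ), {x : ℤ | g.eval x = v} := by
      intro x hx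
      simp only [Set.mem_setOf_eq, abs_le] at hx
      refine Set.mem_iUnion₂.2 ⟨g.eval x, ?_, rfl⟩
      simp [Finset.mem_Icc, hx.1, hx.2]
    refine Set.Finite.subset (Set.Finite.biUnion (Finset.Icc (-|N|) (|N|)).finite_toSet ?_) this
    intro v _
    have hgv : g - C v ≠ 0 := by
      intro h
      have := natDegree_sub_C (p := g) (a := v)
      rw [h, natDegree_zero] at this
      omega
    have := finite_setOf_isRoot hgv
    refine this.subset ?_
    intro x hx
    simp only [Set.mem_setOf_eq] at hx ⊢
    simp [IsRoot, hx]
  -- pick u with |g (N*M*u)| > |N|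
  have hinj : Function.Injective (fun u : ℤ => N * M * u) :=
    fun a b h => by
      have : N * M ≠ 0 := mul_ne_zero hN hM0
      exact mul_left_cancel₀ this h
  have hA : (Set.range (fun u : ℤ => N * M * u)).Infinite :=
    Set.infinite_range_of_injective hinj
  obtain ⟨x, hxA, hxB⟩ := (hA.diff hbad).nonempty
  obtain ⟨u, rfl⟩ := hxA
  simp only [Set.mem_setOf_eq, not_le] at hxB
  set x := N * M * u with hx
  -- x ∣ g x - N
  have hdvd : x ∣ g.eval x - N := by
    have := Polynomial.sub_dvd_eval_sub x 0 g
    simpa using this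
  obtain ⟨s, hs⟩ := hdvd
  have hgx : g.eval x = N * (1 + M * u * s) := by
    rw [mul_add, mul_one]
    rw [sub_eq_iff_eq_add] at hs
    rw [hs, hx]; ring
  set w : ℤ := 1 + M * u * s with hw
  have hwabs : 1 < |w| := by
    have := hxB
    rw [hgx, abs_mul] at this
    by_contra h
    push_neg at h
    nlinarith [abs_nonneg N, abs_nonneg w]
  have hw1 : w.natAbs ≠ 1 := by
    rw [Int.abs_eq_natAbs] at hwabs
    omega
  obtain ⟨r, hr, hrw⟩ := Int.exists_prime_and_dvd hw1
  set q : ℕ := r.natAbs with hq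
  have hqprime : q.Prime := Int.prime_iff_natAbs_prime.1 hr
  have hqw : (q : ℤ) ∣ w := (Int.natAbs_dvd).2 hrw
  have hqg : (q : ℤ) ∣ g.eval x := by
    rw [hgx]; exact Dvd.dvd.mul_left hqw N
  have hqT : q ∈ T := hfin.mem_toFinset.2 ⟨hqprime, x, hqg⟩
  have hqM : (q : ℤ) ∣ M := Finset.dvd_prod_of_mem _ hqT
  have : (q : ℤ) ∣ 1 := by
    have h1 : (q : ℤ) ∣ M * u * s := Dvd.dvd.mul_right (Dvd.dvd.mul_right hqM u) s
    have := dvd_sub hqw h1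
    simpa [hw] using this
  have : q = 1 := by exact_mod_cast Int.eq_one_of_dvd_one (by positivity) this
  exact hqprime.one_lt.ne' this

/-- For a polynomial `p ∈ ℤ[x]` of degree at least 2, there are infinitely many primes `q`
such that the induced map `ℤ/qℤ → ℤ/qℤ`, `n mod q ↦ p(n) mod q`, is not surjective. -/

theorem infinitely_many_primes_polynomial_not_surjective
    (p : Polynomial ℤ) (hdeg : 2 ≤ p.natDegree) :
    {q : ℕ | q.Prime ∧ ¬ Function.Surjective
      (fun x : ZMod q => (p.map (Int.castRingHom (ZMod q))).eval x)}.Infinite := by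
  -- choose c with p'(c) ≠ 0
  have hd0 : p.derivative ≠ 0 := by
    intro h
    have := natDegree_eq_zero_of_derivative_eq_zero h
    omega
  obtain ⟨c, hc⟩ : ∃ c : ℤ, p.derivative.eval c ≠ 0 := by
    by_contra h
    push_neg at h
    exact hd0 (zero_of_eval_zero _ h)
  set P : Polynomial ℤ := taylor c p with hP
  have hPdeg : P.natDegree = p.natDegree := natDegree_taylor p c
  -- X ∣ P - C (P.eval 0)
  have hXdvd : X ∣ P - C (P.eval 0) := by
    rw [X_dvd_iff]
    simp [coeff_zero_eq_eval_zero]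
  obtain ⟨g, hg⟩ := hXdvd
  have hsub : (P - C (P.eval 0)).natDegree = p.natDegree := by
    rw [natDegree_sub_C, hPdeg]
  have hsub0 : P - C (P.eval 0) ≠ 0 := by
    intro h; rw [h, natDegree_zero] at hsub; omega
  have hgne : g ≠ 0 := by rintro rfl; simp at hg; exact hsub0 hg
  have hgdeg : 0 < g.natDegree := by
    have := hsub
    rw [hg, natDegree_mul X_ne_zero hgne, natDegree_X] at this
    omega
  have hg0 : g.eval 0 = p.derivative.eval c := by
    have h1 : (P - C (P.eval 0)).coeff 1 = P.coeff 1 := by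
      rw [coeff_sub, coeff_C]; norm_num
    have h2 : (X * g).coeff 1 = g.coeff 0 := by
      rw [X_mul, coeff_mul_X]
    rw [← taylor_coeff_one c p, ← h1, hg, h2, coeff_zero_eq_eval_zero]
  have hgN : g.eval 0 ≠ 0 := by rw [hg0]; exact hc
  -- infinite primes dividing values of g, minus finite primes dividing g(0)
  have hinf := infinite_prime_dvd_eval g hgdeg hgN
  have hfin : {q : ℕ | (q : ℤ) ∣ g.eval 0}.Finite := by
    refine (Set.finite_Iic (g.eval 0).natAbs).subset ?_
    intro q hq
    simp only [Set.mem_setOf_eq] at hq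
    have : q ∣ (g.eval 0).natAbs := Int.natCast_dvd_natCast.1 (Int.dvd_natAbs.2 hq)
    exact Nat.le_of_dvd (Int.natAbs_pos.2 hgN) this
  refine (hinf.diff hfin).mono ?_
  rintro q ⟨⟨hqp, a, hqa⟩, hqN⟩
  simp only [Set.mem_setOf_eq] at hqN
  refine ⟨hqp, ?_⟩
  intro hsurj
  haveI : Fact q.Prime := ⟨hqp⟩
  haveI : NeZero q := ⟨hqp.ne_zero⟩
  have hinje : Function.Injective
      (fun x : ZMod q => (p.map (Int.castRingHom (ZMod q))).eval x) :=
    Finite.injective_iff_surjective.2 hsurj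
  -- q ∤ a
  have hqa' : ¬ (q : ℤ) ∣ a := by
    intro h
    have h2 : (q : ℤ) ∣ g.eval a - g.eval 0 := dvd_trans (by simpa using h) (sub_dvd_eval_sub a 0 g)
    exact hqN (by have := dvd_sub hqa h2; simpa using this)
  -- p(a+c) ≡ p(c) mod q
  have hval : (q : ℤ) ∣ p.eval (a + c) - p.eval c := by
    have h1 : p.eval (a + c) - p.eval c = a * g.eval a := by
      have e1 : P.eval a = p.eval (a + c) := taylor_eval c p a
      have e2 : P.eval 0 = p.eval c := by simpa using taylor_eval c p 0
      have := congrArg (Polynomial.eval a) hg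
      simp only [eval_sub, eval_C, eval_mul, eval_X] at this
      rw [← e1, ← e2, this]
    rw [h1]
    exact Dvd.dvd.mul_left hqa a
  -- transfer to ZMod q
  have key : ∀ x : ℤ, (p.map (Int.castRingHom (ZMod q))).eval ((x : ZMod q))
      = ((p.eval x : ℤ) : ZMod q) := by
    intro x
    rw [eval_map]
    exact eval₂_at_apply (Int.castRingHom (ZMod q)) x
  have heq : ((a + c : ℤ) : ZMod q) = ((c : ℤ) : ZMod q) → False := by
    intro h
    have : ((a : ℤ) : ZMod q) = 0 := by
      have := sub_eq_zero.2 h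
      push_cast at this ⊢
      linear_combination this
    exact hqa' ((ZMod.intCast_zmod_eq_zero_iff_dvd a q).1 this)
  apply heq
  apply hinje
  show (p.map (Int.castRingHom (ZMod q))).eval _ = (p.map (Int.castRingHom (ZMod q))).eval _
  rw [key, key]
  exact (ZMod.intCast_eq_intCast_iff' _ _ _).2 (Int.ModEq.symm (Int.modEq_iff_dvd.2 (by simpa using hval)))
end

section
/- Let p ∈ ℤ[x] be a polynomial with deg p ≥ 2 and positive leading coefficient. Then there are infinitely many primes q such that for every residue a ∈ {0,1,…,q−1} there exists a residue b ∈ {0,1,…,q−1} such that, setting A = {m ∈ ℕ : m ≡ a (mod q)} and B = {m ∈ ℕ : m ≡ b (mod q)}, one has (A + B) ∩ {p(n) : n ∈ ℕ} = ∅. -/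
open Polynomial Finset

lemma sum_pow_card_sub_one (q : ℕ) [Fact q.Prime] :
    ∑ x : ZMod q, x ^ (q - 1) = -1 := by
  have hq : q = Fintype.card (ZMod q) := (ZMod.card q).symm
  classical
  have h0 : (0 : ZMod q) ^ (q - 1) = 0 := by
    apply zero_pow
    have := (Fact.out : q.Prime).two_le
    omega
  have key : ∀ x : ZMod q, x ^ (q - 1) = if x = 0 then 0 else 1 := by
    intro x
    by_cases hx : x = 0
    · simp [hx, h0]
    · simp [hx, ZMod.pow_card_sub_one_eq_one hx]
  calc ∑ x : ZMod q, x ^ (q - 1) = ∑ x : ZMod q, if x = 0 then (0 : ZMod q) else 1 := by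
        simp only [key]
    _ = -1 := by
        classical
        rw [Finset.sum_ite, Finset.sum_const, Finset.sum_const, smul_zero, zero_add,
          nsmul_eq_mul, mul_one, Finset.filter_ne', Finset.card_erase_of_mem (Finset.mem_univ _)]
        rw [Finset.card_univ, ZMod.card]
        have hq2 : 2 ≤ q := (Fact.out : q.Prime).two_le
        rw [Nat.cast_sub (by omega), ZMod.natCast_self, Nat.cast_one, zero_sub]

lemma not_surj (p : Polynomial ℤ) (hdeg : 2 ≤ p.natDegree) (q : ℕ) [Fact q.Prime]
    (hdvd : p.natDegree ∣ (q - 1)) (hlc : ((p.leadingCoeff : ZMod q)) ≠ 0) :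
    ∃ r : ZMod q, ∀ x : ZMod q, (p.map (Int.castRingHom (ZMod q))).eval x ≠ r := by
  by_contra hc
  push_neg at hc
  set f := p.map (Int.castRingHom (ZMod q)) with hf
  have hsurj : Function.Surjective (fun x => f.eval x) := fun r => hc r
  have hqp : q.Prime := Fact.out
  have hq2 : 2 ≤ q := hqp.two_le
  have hd1 : p.natDegree ≤ q - 1 := Nat.le_of_dvd (by omega) hdvd
  set d := p.natDegree with hd
  set t := (q - 1) / d with ht
  have htd : d * t = q - 1 := Nat.mul_div_cancel' hdvd
  have ht1 : 1 ≤ t := Nat.one_le_iff_ne_zero.mpr (by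
    intro h; rw [h, mul_zero] at htd; omega)
  have htlt : t < q - 1 := by
    by_contra h
    push_neg at h
    nlinarith [htd, ht1, hdeg]
  have hfd : f.natDegree = d := natDegree_map_of_leadingCoeff_ne_zero _ hlc
  have hflc : f.leadingCoeff = (p.leadingCoeff : ZMod q) := by
    rw [leadingCoeff, hfd, hd, coeff_map]; rfl
  -- sum computed via surjectivity
  have hcard : Fintype.card (ZMod q) = q := ZMod.card q
  have hbij : Function.Bijective (fun x => f.eval x) :=
    Finite.surjective_iff_bijective.mp hsurj
  have h1 : ∑ x : ZMod q, (f.eval x) ^ t = 0 := by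
    rw [Fintype.sum_bijective _ hbij (fun x => (f.eval x)^t) (fun y => y ^ t) (fun x => rfl)]
    exact FiniteField.sum_pow_lt_card_sub_one _ _ (by rw [hcard]; exact htlt)
  -- sum computed via coefficients
  have h2 : ∑ x : ZMod q, (f.eval x) ^ t = -(p.leadingCoeff : ZMod q) ^ t := by
    have hg : (f ^ t).natDegree = q - 1 := by
      rw [natDegree_pow, hfd, mul_comm, htd]
    have : ∀ x : ZMod q, (f.eval x) ^ t = ∑ i ∈ Finset.range (q - 1 + 1), (f ^ t).coeff i * x ^ i := by
      intro x
      rw [← eval_pow, eval_eq_sum_range, hg]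
    simp only [this]
    rw [Finset.sum_comm]
    rw [Finset.sum_range_succ]
    have hz : ∀ i ∈ Finset.range (q - 1), ∑ x : ZMod q, (f ^ t).coeff i * x ^ i = 0 := by
      intro i hi
      rw [← Finset.mul_sum]
      rw [FiniteField.sum_pow_lt_card_sub_one _ _ (by rw [hcard]; exact Finset.mem_range.mp hi)]
      ring
    rw [Finset.sum_congr rfl hz, Finset.sum_const, smul_zero, zero_add]
    rw [← Finset.mul_sum, sum_pow_card_sub_one]
    have hcoef : (f ^ t).coeff (q - 1) = (p.leadingCoeff : ZMod q) ^ t := by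
      have : (f ^ t).coeff (q - 1) = (f ^ t).leadingCoeff := by rw [leadingCoeff, hg]
      rw [this, leadingCoeff_pow, hflc]
    rw [hcoef]; ring
  rw [h1] at h2
  exact (pow_ne_zero t hlc) (neg_eq_zero.mp h2.symm)

/-- For a polynomial `p ∈ ℤ[x]` of degree at least 2 with positive leading coefficient,
there are infinitely many primes `q` such that for every residue `a` modulo `q` there is a
residue `b` modulo `q` for which, with `A = {m : m ≡ a (mod q)}` and
`B = {m : m ≡ b (mod q)}`, the sumset `A + B` misses all values `p(n)`, `n ∈ ℕ`. -/
theorem infinitely_many_primes_congruence_classes_avoid_polynomial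
    (p : Polynomial ℤ) (hdeg : 2 ≤ p.natDegree) (hlead : 0 < p.leadingCoeff) :
    {q : ℕ | q.Prime ∧ ∀ a : ℕ, a < q → ∃ b : ℕ, b < q ∧
      ¬ ∃ (m₁ m₂ n : ℕ), m₁ % q = a ∧ m₂ % q = b ∧
        (m₁ : ℤ) + (m₂ : ℤ) = p.eval (n : ℤ)}.Infinite := by
  classical
  have hdne : p.natDegree ≠ 0 := by omega
  have hinf := Nat.infinite_setOf_prime_modEq_one (k := p.natDegree) hdne
  have hfin : {q : ℕ | q ≤ p.leadingCoeff.natAbs}.Finite := Set.finite_le_nat _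
  refine Set.Infinite.mono ?_ (hinf.diff hfin)
  rintro q ⟨⟨hq, hmod⟩, hgt⟩
  simp only [Set.mem_setOf_eq, not_le] at hgt
  haveI : Fact q.Prime := ⟨hq⟩
  haveI : NeZero q := ⟨hq.pos.ne'⟩
  have hdvd : p.natDegree ∣ q - 1 := (Nat.modEq_iff_dvd' hq.one_le).mp hmod.symm
  have hlc : ((p.leadingCoeff : ZMod q)) ≠ 0 := by
    intro h
    rw [ZMod.intCast_zmod_eq_zero_iff_dvd] at h
    have h2 : (q : ℤ) ≤ p.leadingCoeff := Int.le_of_dvd hlead h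
    have h3 : (p.leadingCoeff.natAbs : ℤ) = p.leadingCoeff := Int.natAbs_of_nonneg hlead.le
    omega
  obtain ⟨r, hr⟩ := not_surj p hdeg q hdvd hlc
  refine ⟨hq, fun a ha => ⟨(r - (a : ZMod q)).val, ZMod.val_lt _, ?_⟩⟩
  rintro ⟨m₁, m₂, n, h1, h2, h3⟩
  have e1 : ((m₁ : ℕ) : ZMod q) = (a : ZMod q) := by
    conv_lhs => rw [← Nat.mod_add_div m₁ q]
    push_cast
    simp [h1]
  have e2 : ((m₂ : ℕ) : ZMod q) = r - (a : ZMod q) := by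
    conv_lhs => rw [← Nat.mod_add_div m₂ q]
    push_cast
    simp [h2, ZMod.natCast_val, ZMod.cast_id]
  have e3 : ((p.eval ((n : ℕ) : ℤ) : ℤ) : ZMod q) =
      (p.map (Int.castRingHom (ZMod q))).eval ((n : ℕ) : ZMod q) := by
    rw [Polynomial.eval_map,
      show ((n : ℕ) : ZMod q) = (Int.castRingHom (ZMod q)) ((n : ℕ) : ℤ) by simp,
      Polynomial.eval₂_at_apply]
    simp
  have e4 := congrArg (fun z : ℤ => (z : ZMod q)) h3
  simp only [Int.cast_add, Int.cast_natCast] at e4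
  rw [e1, e2, e3] at e4
  exact hr _ (by rw [← e4]; ring)
end
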